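/- arXiv:1207.2125 — 2 statements merged into one kernel-verified Lean document; each statement's English description precedes it below -/
import Mathlib

section
/- (Monotonicity) Consider local search allocation with a fixed deterministic tie-breaking rule. Let X^(k) be the load vector after allocating k balls with birthplaces u_1,...,u_k, and Z^(i,k) the load vector after allocating the k−1 balls obtained by removing the i-th ball (birthplaces u_1,...,u_{i-1},u_{i+1},...,u_k). Then Σ_{v ∈ V} |X_v^(k) − Z_v^(i,k)| = 1; in particular Z_v^(i,k) ≤ X_v^(k) for all v (removing a ball never increases any load). -/
open Finset

variable {V : Type*} [Fintype V] [DecidableEq V]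

/-- One step of the local search from `u` with current loads `x`:
among the neighbors of `u` (listed in the tie-breaking order `ξ u`) that have load
strictly smaller than `x u`, move to the first one of minimal load; if there is no
such neighbor, stay at `u` (i.e. `u` is a local minimum). -/
def lsNext (G : SimpleGraph V) [DecidableRel G.Adj] (ξ : V → List V)
    (x : V → ℕ) (u : V) : V :=
  ((((ξ u).filter (fun w => decide (G.Adj u w ∧ x w < x u)))).argmin x).getD u

/-- Iterate the local search for at most `n` steps (stopping at a local minimum). -/
def lsIter (G : SimpleGraph V) [DecidableRel G.Adj] (ξ : V → List V)
    (x : V → ℕ) : ℕ → V → V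
  | 0, u => u
  | n + 1, u => if lsNext G ξ x u = u then u else lsIter G ξ x n (lsNext G ξ x u)

/-- The vertex where a ball born at `u` is placed: since each local-search step strictly
decreases the load, `x u` steps always suffice to reach a local minimum. -/
def lsPlace (G : SimpleGraph V) [DecidableRel G.Adj] (ξ : V → List V)
    (x : V → ℕ) (u : V) : V :=
  lsIter G ξ x (x u) u

/-- Add one ball born at `u` to the load vector `x`. -/
def lsAdd (G : SimpleGraph V) [DecidableRel G.Adj] (ξ : V → List V)
    (x : V → ℕ) (u : V) : V → ℕ :=
  fun v => x v + if v = lsPlace G ξ x u then 1 else 0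

/-- The load vector after allocating the balls with birthplaces `bs` (in order) by
local search allocation with the deterministic tie-breaking rule `ξ`. -/
def lsLoads (G : SimpleGraph V) [DecidableRel G.Adj] (ξ : V → List V)
    (bs : List V) : V → ℕ :=
  bs.foldl (lsAdd G ξ) (fun _ => 0)

/-!
Couple the allocations with and without the removed ball from that ball onwards. The invariant
is that the loads with the ball are the loads without it plus one extra ball sitting at a local
minimum `w` of the latter. Away from `w` the two walks see the same strictly lower neighbours, so
a new ball either lands on the same vertex in both systems, or its walk without the extra ball
ends at `w`. In the second case the system without the extra ball catches up with the other one,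
which in turn receives its new ball at one of its own local minima. Either way the invariant
survives, and in the end the two load vectors differ by a single ball.
-/

namespace List

variable {α : Type*} [DecidableEq α]

theorem idxOf_filter_le_of_idxOf_le (p : α → Bool) {a b : α} (ha : p a) :
    ∀ {l : List α}, l.idxOf a ≤ l.idxOf b → (l.filter p).idxOf a ≤ (l.filter p).idxOf b
  | [], _ => le_rfl
  | c :: l, h => by
    have ih : l.idxOf a ≤ l.idxOf b → _ := idxOf_filter_le_of_idxOf_le p ha (l := l)
    by_cases hca : c = a
    · subst hca; simp [ha]
    by_cases hcb : c = b
    · subst hcb; simp [idxOf_cons_ne _ hca] at h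
    rw [idxOf_cons_ne _ hca, idxOf_cons_ne _ hcb, Nat.succ_le_succ_iff] at h
    by_cases hc : p c
    · simpa [filter_cons, hc, idxOf_cons_ne _ hca, idxOf_cons_ne _ hcb] using ih h
    · simpa [filter_cons, hc] using ih h

variable {β : Type*} [LinearOrder β]

theorem argmin_filter_eq_of_argmin_eq {f g : α → β} {p : α → Bool} {l : List α} {n : α}
    (hn : l.argmin f = some n) (hpn : p n) (hfg : ∀ a ∈ l, f a ≤ g a) (hgn : g n = f n) :
    (l.filter p).argmin g = some n := by
  rw [argmin_eq_some_iff] at hn ⊢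
  obtain ⟨hnl, hmin, hfirst⟩ := hn
  refine ⟨mem_filter.2 ⟨hnl, hpn⟩, fun a ha => ?_, fun a ha hle => ?_⟩
  · have ha := (mem_filter.1 ha).1
    exact hgn ▸ (hmin a ha).trans (hfg a ha)
  · have ha := (mem_filter.1 ha).1
    exact idxOf_filter_le_of_idxOf_le p hpn (hfirst a ha ((hfg a ha).trans (hgn ▸ hle)))

end List

namespace Function

variable {α : Type*} {f : α → α} {φ : α → ℕ}

theorem isFixedPt_iterate_of_descent (hf : ∀ a, f a ≠ a → φ (f a) < φ a) :
    ∀ {n : ℕ} {a : α}, φ a ≤ n → IsFixedPt f (f^[n] a)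
  | 0, a, ha => by_contra fun h => by have := hf a h; omega
  | n + 1, a, ha => by
    by_cases h : f a = a
    · rw [iterate_fixed h]; exact h
    · rw [iterate_succ_apply]
      exact isFixedPt_iterate_of_descent hf (by have := hf a h; omega)

theorem iterate_eq_of_descent (hf : ∀ a, f a ≠ a → φ (f a) < φ a) {n : ℕ} {a : α}
    (hn : φ a ≤ n) : f^[n] a = f^[φ a] a := by
  obtain ⟨k, rfl⟩ := Nat.exists_eq_add_of_le' hn
  rw [iterate_add_apply, (isFixedPt_iterate_of_descent hf le_rfl).iterate]

end Function

section LocalSearchStep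

omit [Fintype V] [DecidableEq V]

variable {G : SimpleGraph V} [DecidableRel G.Adj] {ξ : V → List V} {x y : V → ℕ} {u w : V}

def lsCand (G : SimpleGraph V) [DecidableRel G.Adj] (ξ : V → List V) (x : V → ℕ) (u : V) :
    List V :=
  (ξ u).filter fun w => decide (G.Adj u w ∧ x w < x u)

theorem lsNext_eq_getD_argmin : lsNext G ξ x u = ((lsCand G ξ x u).argmin x).getD u := rfl

theorem mem_lsCand {v : V} : v ∈ lsCand G ξ x u ↔ v ∈ ξ u ∧ G.Adj u v ∧ x v < x u := by
  simp [lsCand]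

theorem argmin_lsCand_of_lsNext_ne (h : lsNext G ξ x u ≠ u) :
    (lsCand G ξ x u).argmin x = some (lsNext G ξ x u) := by
  rw [lsNext_eq_getD_argmin] at h ⊢
  cases hm : (lsCand G ξ x u).argmin x <;> simp_all

theorem lsNext_lt (h : lsNext G ξ x u ≠ u) : x (lsNext G ξ x u) < x u :=
  (mem_lsCand.1 (List.argmin_mem (argmin_lsCand_of_lsNext_ne h))).2.2

theorem lsNext_eq_self_iff : lsNext G ξ x u = u ↔ lsCand G ξ x u = [] := by
  refine ⟨fun h => ?_, fun h => by simp [lsNext_eq_getD_argmin, h]⟩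
  rcases hm : (lsCand G ξ x u).argmin x with _ | a
  · exact List.argmin_eq_none.1 hm
  · have ha : lsNext G ξ x u = a := by simp [lsNext_eq_getD_argmin, hm]
    have hlt := (mem_lsCand.1 (List.argmin_mem hm)).2.2
    rw [← ha, h] at hlt
    exact (lt_irrefl _ hlt).elim

def IsLocalMinLoad (G : SimpleGraph V) (x : V → ℕ) (w : V) : Prop :=
  ∀ v, G.Adj w v → x w ≤ x v

theorem lsNext_eq_self_of_isLocalMinLoad (h : IsLocalMinLoad G x w) : lsNext G ξ x w = w :=
  lsNext_eq_self_iff.2 <| List.eq_nil_iff_forall_not_mem.2 fun v hv =>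
    (mem_lsCand.1 hv).2.2.not_ge (h v (mem_lsCand.1 hv).2.1)

theorem lsCand_eq_filter_of_le (hle : y ≤ x) (hu : x u = y u) :
    lsCand G ξ x u = (lsCand G ξ y u).filter fun v => decide (G.Adj u v ∧ x v < x u) := by
  rw [lsCand, lsCand, List.filter_filter]
  refine List.filter_congr fun v _ => ?_
  by_cases h : G.Adj u v ∧ x v < x u
  · have : y v < y u := hu ▸ (hle v).trans_lt h.2
    simp [h, this]
  · simp [h]

end LocalSearchStep

section LocalSearchPlace

omit [Fintype V]

variable {G : SimpleGraph V} [DecidableRel G.Adj] {ξ : V → List V} {x y : V → ℕ} {u w : V}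

theorem lsIter_eq_iterate (n : ℕ) (u : V) : lsIter G ξ x n u = (lsNext G ξ x)^[n] u := by
  induction n generalizing u with
  | zero => rfl
  | succ n ih =>
    rw [lsIter, Function.iterate_succ_apply]
    split_ifs with h
    · rw [h, Function.iterate_fixed h]
    · exact ih _

theorem lsNext_lsPlace : lsNext G ξ x (lsPlace G ξ x u) = lsPlace G ξ x u := by
  rw [lsPlace, lsIter_eq_iterate]
  exact Function.isFixedPt_iterate_of_descent (fun _ => lsNext_lt) le_rfl

theorem lsPlace_of_lsNext_eq_self (h : lsNext G ξ x u = u) : lsPlace G ξ x u = u := by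
  rw [lsPlace, lsIter_eq_iterate, Function.iterate_fixed h]

theorem lsPlace_lsNext : lsPlace G ξ x (lsNext G ξ x u) = lsPlace G ξ x u := by
  by_cases h : lsNext G ξ x u = u
  · rw [h]
  have hlt := lsNext_lt h
  obtain ⟨m, hm⟩ := Nat.exists_eq_add_one_of_ne_zero (n := x u) (by omega)
  rw [lsPlace, lsPlace, lsIter_eq_iterate, lsIter_eq_iterate, hm, Function.iterate_succ_apply,
    Function.iterate_eq_of_descent (fun _ => lsNext_lt) (by omega : x (lsNext G ξ x u) ≤ m)]

theorem isLocalMinLoad_lsPlace (hξ : ∀ u v, G.Adj u v → v ∈ ξ u) :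
    IsLocalMinLoad G x (lsPlace G ξ x u) := by
  intro v hadj
  by_contra! hlt
  have hv : v ∈ lsCand G ξ x (lsPlace G ξ x u) := mem_lsCand.2 ⟨hξ _ _ hadj, hadj, hlt⟩
  simp [lsNext_eq_self_iff.1 lsNext_lsPlace] at hv

theorem lsNext_eq_of_le (hle : y ≤ x) (hu : x u = y u)
    (hn : x (lsNext G ξ y u) = y (lsNext G ξ y u)) : lsNext G ξ x u = lsNext G ξ y u := by
  by_cases hy : lsNext G ξ y u = u
  · rw [hy, lsNext_eq_self_iff, lsCand_eq_filter_of_le hle hu, lsNext_eq_self_iff.1 hy,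
      List.filter_nil]
  have hmin := argmin_lsCand_of_lsNext_ne hy
  obtain ⟨-, hadj, hlt⟩ := mem_lsCand.1 (List.argmin_mem hmin)
  have hx : (lsCand G ξ x u).argmin x = some (lsNext G ξ y u) := by
    rw [lsCand_eq_filter_of_le hle hu]
    exact List.argmin_filter_eq_of_argmin_eq hmin (by simp [hadj, hn, hu, hlt])
      (fun a _ => hle a) hn
  simp [lsNext_eq_getD_argmin, hx]

theorem lsPlace_eq_or_lsPlace_eq (hle : y ≤ x) (hx : ∀ v, v ≠ w → x v = y v)
    (hw : lsNext G ξ y w = w) (u : V) :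
    lsPlace G ξ x u = lsPlace G ξ y u ∨ lsPlace G ξ y u = w := by
  induction hk : y u using Nat.strong_induction_on generalizing u with
  | _ k ih =>
  by_cases huw : u = w
  · subst huw
    exact .inr (lsPlace_of_lsNext_eq_self hw)
  set n := lsNext G ξ y u with hn
  by_cases hnw : n = w
  · rw [← lsPlace_lsNext (x := y), ← hn, hnw, lsPlace_of_lsNext_eq_self hw]
    exact .inr rfl
  have hnext : lsNext G ξ x u = n := lsNext_eq_of_le hle (hx u huw) (hx n hnw)
  by_cases hnu : n = u
  · exact .inl <| by
      rw [lsPlace_of_lsNext_eq_self (hnext.trans hnu), lsPlace_of_lsNext_eq_self hnu]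
  rw [← lsPlace_lsNext (x := x), hnext, ← lsPlace_lsNext (x := y), ← hn]
  exact ih _ (hk ▸ lsNext_lt hnu) n rfl

theorem lsAdd_eq_add_single (x : V → ℕ) (u : V) :
    lsAdd G ξ x u = x + Pi.single (lsPlace G ξ x u) 1 := by
  ext v
  simp [lsAdd, Pi.single_apply]

theorem lsLoads_append (l₁ l₂ : List V) :
    lsLoads G ξ (l₁ ++ l₂) = l₂.foldl (lsAdd G ξ) (lsLoads G ξ l₁) :=
  List.foldl_append

structure ExtraBallAtLocalMin (G : SimpleGraph V) (x y : V → ℕ) (w : V) : Prop where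
  eq_add_single : x = y + Pi.single w 1
  isLocalMinLoad : IsLocalMinLoad G y w

theorem extraBallAtLocalMin_lsAdd (hξ : ∀ u v, G.Adj u v → v ∈ ξ u) (y : V → ℕ)
    (u : V) :
    ExtraBallAtLocalMin G (lsAdd G ξ y u) y (lsPlace G ξ y u) :=
  ⟨lsAdd_eq_add_single y u, isLocalMinLoad_lsPlace hξ⟩

theorem ExtraBallAtLocalMin.exists_lsAdd (hξ : ∀ u v, G.Adj u v → v ∈ ξ u)
    (h : ExtraBallAtLocalMin G x y w) (u : V) :
    ∃ w', ExtraBallAtLocalMin G (lsAdd G ξ x u) (lsAdd G ξ y u) w' := by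
  obtain ⟨hxy, hmin⟩ := h
  by_cases hp : lsPlace G ξ y u = w
  · refine ⟨lsPlace G ξ x u, ?_⟩
    rw [show lsAdd G ξ y u = x by rw [lsAdd_eq_add_single, hp, hxy]]
    exact extraBallAtLocalMin_lsAdd hξ x u
  have hq : lsPlace G ξ x u = lsPlace G ξ y u :=
    (lsPlace_eq_or_lsPlace_eq (fun v => by simp [hxy]) (fun v hv => by simp [hxy, hv])
      (lsNext_eq_self_of_isLocalMinLoad hmin) u).resolve_right hp
  refine ⟨w, ?_, fun v hadj => ?_⟩
  · rw [lsAdd_eq_add_single, lsAdd_eq_add_single, hq, hxy, add_right_comm]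
  · have := hmin v hadj
    simp [lsAdd_eq_add_single, Pi.single_apply, Ne.symm hp]
    omega

theorem ExtraBallAtLocalMin.exists_foldl_lsAdd (hξ : ∀ u v, G.Adj u v → v ∈ ξ u)
    (h : ExtraBallAtLocalMin G x y w) (l : List V) :
    ∃ w', ExtraBallAtLocalMin G (l.foldl (lsAdd G ξ) x) (l.foldl (lsAdd G ξ) y) w' := by
  induction l generalizing x y w with
  | nil => exact ⟨w, h⟩
  | cons u l ih =>
    obtain ⟨w', h'⟩ := h.exists_lsAdd hξ u
    exact ih h'

end LocalSearchPlace

theorem sum_abs_add_single_sub (y : V → ℕ) (w : V) :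
    ∑ v, |((y + Pi.single w 1 : V → ℕ) v : ℤ) - y v| = 1 := by
  simp only [Pi.add_apply, Nat.cast_add, add_sub_cancel_left]
  simp [Pi.single_apply, apply_ite]

/-- **Monotonicity of local search allocation.**
With a fixed deterministic tie-breaking rule `ξ`, removing the `i`-th ball changes the
load vector by exactly `1` in `ℓ¹`-norm; in particular removing a ball never increases
the load of any vertex. -/
theorem lsLoads_monotonicity (G : SimpleGraph V) [DecidableRel G.Adj]
    (ξ : V → List V)
    (hξ : ∀ v, (ξ v).Nodup ∧ ∀ w, w ∈ ξ v ↔ G.Adj v w)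
    (bs : List V) (i : ℕ) (hi : i < bs.length) :
    (∑ v, |(lsLoads G ξ bs v : ℤ) - (lsLoads G ξ (bs.eraseIdx i) v : ℤ)| = 1) ∧
      ∀ v, lsLoads G ξ (bs.eraseIdx i) v ≤ lsLoads G ξ bs v := by
  have hadj : ∀ u v, G.Adj u v → v ∈ ξ u := fun u v h => ((hξ u).2 v).2 h
  set c := lsLoads G ξ (bs.take i)
  have hX : lsLoads G ξ bs = (bs.drop (i + 1)).foldl (lsAdd G ξ) (lsAdd G ξ c bs[i]) := by
    conv_lhs => rw [← List.take_append_drop i bs, ← List.getElem_cons_drop hi]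
    rw [lsLoads_append, List.foldl_cons]
  have hZ : lsLoads G ξ (bs.eraseIdx i) = (bs.drop (i + 1)).foldl (lsAdd G ξ) c := by
    rw [List.eraseIdx_eq_take_drop_succ, lsLoads_append]
  obtain ⟨w, hw⟩ :=
    (extraBallAtLocalMin_lsAdd hadj c bs[i]).exists_foldl_lsAdd hadj (bs.drop (i + 1))
  rw [hX, hZ, hw.eq_add_single]
  exact ⟨sum_abs_add_single_sub _ w, fun v => Nat.le_add_right _ _⟩
end

section
/- (Grid upper-bound contradiction inequality) Let d ≥ 1 be constant and α ≥ 16e(16d)^d(d+1)(log n / log log n)^{1/(d+1)}. Suppose in the d-dimensional torus grid a vertex u has load at least α/2 and every vertex of B̃_u^{α/(4d)} has load at least α/2 − d·(α/(4d)) = α/4 (by smoothness along ℓ1 paths). Then the total load in B̃_u^{2α} is at least (α/(2d))^d · (α/4) ≥ 4e(d+1)(log n/log log n)^{1/(d+1)}·(8α)^d, which exceeds the bound 4e(d+1)(log n/log log n)^{1/(d+1)}·(6α)^d on the number of balls born in B̃_u^{2α}. -/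
open Finset
open scoped Classical

/-- Cyclic distance on `{0,...,m-1}`: `min {|a−b|, m−|a−b|}`. -/
def cdist {m : ℕ} (a b : Fin m) : ℕ :=
  min ((a.1 + m - b.1) % m) ((b.1 + m - a.1) % m)

/-- The graph distance of the `d`-dimensional torus grid on `(Fin m)^d`:
`dist(u,v) = Σ_i min{|u_i−v_i|, m−|u_i−v_i|}`. -/
def tdist {d m : ℕ} (u v : Fin d → Fin m) : ℕ :=
  ∑ i, cdist (u i) (v i)

/-!
Every vertex of the `ℓ∞`-ball of radius `r = α/(4d)` around `u` carries load at least `α/4`, and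
that ball has at least `(2r + 1)^d ≥ (α/(2d))^d` vertices and lies inside the ball of radius `2α`.
So the load in the big ball is at least `(α/(2d))^d · α/4`, and the lower bound on `α` makes this
exceed `4e(d+1)L(6α)^d`, where `L = (log n / log log n)^{1/(d+1)} > 0`, because `(6α)^d (2d)^d = (12d)^d α^d < (16d)^d α^d`.
-/

lemma cdist_eq_min_val_sub {m : ℕ} (a b : Fin m) : cdist a b = min (a - b).val (b - a).val := by
  simp only [cdist, Fin.val_sub]
  congr 1 <;> congr 1 <;> omega

lemma cdist_comm {m : ℕ} (a b : Fin m) : cdist a b = cdist b a := by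
  simp only [cdist_eq_min_val_sub, min_comm]

lemma cdist_add_right {m : ℕ} [NeZero m] (a b c : Fin m) : cdist (a + c) (b + c) = cdist a b := by
  simp only [cdist_eq_min_val_sub, add_sub_add_right_eq_sub]

lemma cdist_le_of_le {m : ℕ} {a b : Fin m} (h : a ≤ b) : cdist a b ≤ b.val - a.val := by
  rw [cdist_eq_min_val_sub, ← Fin.sub_val_of_le h]
  exact min_le_right _ _

lemma two_mul_add_one_le_card_cdist_le {m r : ℕ} (hm : 2 * r + 1 ≤ m) (a : Fin m) :
    2 * r + 1 ≤ #{x | cdist a x ≤ r} := by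
  have : NeZero m := ⟨by omega⟩
  obtain ⟨c, hc⟩ : ∃ c : Fin m, c.val = r := ⟨⟨r, by omega⟩, rfl⟩
  let f (j : Fin (2 * r + 1)) : Fin m := a - c + Fin.castLE hm j
  have hf : Function.Injective f := (add_right_injective _).comp (Fin.castLE_injective hm)
  have hball (j : Fin (2 * r + 1)) : cdist a (f j) ≤ r := by
    rw [← cdist_add_right a (f j) (c - a), show a + (c - a) = c by abel,
      show f j + (c - a) = Fin.castLE hm j by simp only [f]; abel]
    have hj := j.isLt
    rcases le_total c (Fin.castLE hm j) with h | h
    · have := cdist_le_of_le h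
      rw [Fin.val_castLE] at this
      omega
    · have := cdist_le_of_le h
      rw [Fin.val_castLE] at this
      rw [cdist_comm]
      omega
  simpa using card_le_card_of_injOn f (s := univ) (fun j _ => by simpa using hball j) hf.injOn

lemma pow_le_card_forall_cdist_le {ι : Type*} [Fintype ι] [DecidableEq ι] {m r : ℕ}
    (hm : 2 * r + 1 ≤ m) (u : ι → Fin m) [DecidablePred fun v : ι → Fin m => ∀ i, cdist (u i) (v i) ≤ r] :
    (2 * r + 1) ^ Fintype.card ι ≤ #{v : ι → Fin m | ∀ i, cdist (u i) (v i) ≤ r} := by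
  have hpi : ({v : ι → Fin m | ∀ i, cdist (u i) (v i) ≤ r} : Finset _)
      = Fintype.piFinset fun i => {x | cdist (u i) x ≤ r} := by
    ext v
    simp
  rw [hpi, Fintype.card_piFinset, ← Finset.card_univ]
  exact Finset.pow_card_le_prod _ _ _ fun i _ => two_mul_add_one_le_card_cdist_le hm (u i)

lemma four_mul_six_mul_pow_lt {d : ℕ} (hd : 1 ≤ d) {c α : ℝ} (hc : 0 < c)
    (hα : 16 * c * (16 * d) ^ d ≤ α) :
    4 * c * (6 * α) ^ d < (α / (2 * d)) ^ d * (α / 4) := by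
  have hd₀ : (0 : ℝ) < d := by exact_mod_cast hd
  have hα₀ : 0 < α := lt_of_lt_of_le (by positivity) hα
  have h12 : (12 * d : ℝ) ^ d < (16 * d) ^ d :=
    pow_lt_pow_left₀ (by linarith) (by positivity) (by omega)
  rw [div_pow, div_mul_div_comm, lt_div_iff₀ (by positivity)]
  calc 4 * c * (6 * α) ^ d * ((2 * d) ^ d * 4) = 16 * c * (12 * d) ^ d * α ^ d := by
        rw [mul_pow 12, show (12 : ℝ) ^ d = 6 ^ d * 2 ^ d by rw [← mul_pow]; norm_num]; ring
    _ < 16 * c * (16 * d) ^ d * α ^ d := by gcongr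
    _ ≤ α * α ^ d := by gcongr
    _ = α ^ d * α := mul_comm _ _

lemma log_div_log_log_natCast_pos {n : ℕ} (h : 0 < Real.log (Real.log n)) :
    0 < Real.log n / Real.log (Real.log n) := by
  have hlog : 1 < Real.log n := by
    by_contra! hle
    exact h.not_ge (Real.log_nonpos (Real.log_natCast_nonneg n) hle)
  exact div_pos (by linarith) h

theorem torus_upper_bound_contradiction_general (d m n : ℕ) (hd : 1 ≤ d)
    (hLL : 0 < Real.log (Real.log n))
    (α : ℕ) (hdvd : 4 * d ∣ α)
    (hα : 16 * Real.exp 1 * (16 * d : ℝ) ^ d * (d + 1) *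
        (Real.log n / Real.log (Real.log n)) ^ ((1 : ℝ) / (d + 1)) ≤ (α : ℝ))
    (hm : 2 * (α / (4 * d)) + 1 ≤ m)
    (X : (Fin d → Fin m) → ℕ) (u : Fin d → Fin m)
    (hsmall : ∀ v : Fin d → Fin m,
      (∀ i, cdist (u i) (v i) ≤ α / (4 * d)) → (α : ℝ) / 4 ≤ (X v : ℝ)) :
    4 * Real.exp 1 * (d + 1) *
        (Real.log n / Real.log (Real.log n)) ^ ((1 : ℝ) / (d + 1)) *
        (6 * α : ℝ) ^ d
      < ∑ v ∈ univ.filter (fun v : Fin d → Fin m => ∀ i, cdist (u i) (v i) ≤ 2 * α),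
          (X v : ℝ) := by
  set L := (Real.log n / Real.log (Real.log n)) ^ ((1 : ℝ) / (d + 1))
  have hc : 0 < Real.exp 1 * (d + 1) * L := by
    have := log_div_log_log_natCast_pos hLL
    positivity
  obtain ⟨r, hαr⟩ := hdvd
  have hradius : α / (4 * d) = r := by rw [hαr, Nat.mul_div_cancel_left r (by omega)]
  rw [hradius] at hm hsmall
  have hball := pow_le_card_forall_cdist_le hm u
  rw [Fintype.card_fin] at hball
  calc _ = 4 * (Real.exp 1 * (d + 1) * L) * (6 * α : ℝ) ^ d := by ring
    _ < ((α : ℝ) / (2 * d)) ^ d * (α / 4) := four_mul_six_mul_pow_lt hd hc (by linarith)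
    _ ≤ ((2 * r + 1 : ℕ) : ℝ) ^ d * (α / 4) := by
        gcongr
        rw [div_le_iff₀ (by positivity), hαr]
        push_cast
        nlinarith
    _ ≤ #{v : Fin d → Fin m | ∀ i, cdist (u i) (v i) ≤ r} * (α / 4) := by
        gcongr
        exact_mod_cast hball
    _ ≤ ∑ v ∈ {v : Fin d → Fin m | ∀ i, cdist (u i) (v i) ≤ r}, (X v : ℝ) := by
        rw [← nsmul_eq_mul]
        exact card_nsmul_le_sum _ _ _ fun v hv => hsmall v (mem_filter.mp hv).2
    _ ≤ _ := by
        have hr : r ≤ 2 * α := by rw [hαr]; nlinarith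
        refine sum_le_sum_of_subset_of_nonneg (fun v hv => ?_) fun _ _ _ => by positivity
        simp only [mem_filter, mem_univ, true_and] at hv ⊢
        exact fun i => (hv i).trans hr

/-- **Grid upper-bound contradiction inequality.**
Let `d ≥ 1` be constant and `α ≥ 16e(16d)^d(d+1)(log n/log log n)^{1/(d+1)}` (for
convenience `α` is taken divisible by `4d`, and the grid side `m` is large enough
that the `ℓ∞`-ball of radius `α/(4d)` does not wrap around).  If in the
`d`-dimensional torus grid on `n = m^d` vertices the vertex `u` has load at least
`α/2` and every vertex of the `ℓ∞`-ball of radius `α/(4d)` around `u` has load at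
least `α/4`, then the total load in the `ℓ∞`-ball of radius `2α` around `u` strictly
exceeds `4e(d+1)(log n/log log n)^{1/(d+1)}·(6α)^d` (the high-probability upper
bound for the number of balls born there). -/
theorem torus_upper_bound_contradiction (d m n : ℕ) (hd : 1 ≤ d) (hn : n = m ^ d)
    (hLL : 0 < Real.log (Real.log n))
    (α : ℕ) (hdvd : 4 * d ∣ α)
    (hα : 16 * Real.exp 1 * (16 * d : ℝ) ^ d * (d + 1) *
        (Real.log n / Real.log (Real.log n)) ^ ((1 : ℝ) / (d + 1)) ≤ (α : ℝ))
    (hm : 2 * (α / (4 * d)) + 1 ≤ m)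
    (X : (Fin d → Fin m) → ℕ) (u : Fin d → Fin m)
    (hu : (α : ℝ) / 2 ≤ (X u : ℝ))
    (hsmall : ∀ v : Fin d → Fin m,
      (∀ i, cdist (u i) (v i) ≤ α / (4 * d)) → (α : ℝ) / 4 ≤ (X v : ℝ)) :
    4 * Real.exp 1 * (d + 1) *
        (Real.log n / Real.log (Real.log n)) ^ ((1 : ℝ) / (d + 1)) *
        (6 * α : ℝ) ^ d
      < ∑ v ∈ univ.filter (fun v : Fin d → Fin m => ∀ i, cdist (u i) (v i) ≤ 2 * α),
          (X v : ℝ) :=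
  torus_upper_bound_contradiction_general d m n hd hLL α hdvd hα hm X u hsmall
end
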